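/- arXiv:2510.01278 — 4 statements merged into one kernel-verified Lean document; each statement's English description precedes it below -/
import Mathlib

section
/- Let k be a fixed unit vector in a finite-dimensional real inner product space and let L_r(q) = 2(1 − ⟨q/‖q‖, k⟩). Then for every nonzero q, the squared norm of the gradient of L_r at q equals (4/‖q‖²)·(1 − ⟨q̃, k⟩²), where q̃ = q/‖q‖. -/
open scoped RealInnerProductSpace

lemma aux_hasFDerivAt_norm {E : Type*} [NormedAddCommGroup E] [InnerProductSpace ℝ E]
    (q : E) (hq : q ≠ 0) :
    HasFDerivAt (fun p : E => ‖p‖) (innerSL ℝ (‖q‖⁻¹ • q)) q := by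
  have hsq : HasFDerivAt (fun p : E => ‖p‖ ^ 2) (2 • (innerSL ℝ q)) q :=
    (hasStrictFDerivAt_norm_sq q).hasFDerivAt
  have hne : ‖q‖ ^ 2 ≠ 0 := pow_ne_zero 2 (norm_ne_zero_iff.mpr hq)
  have h := hsq.sqrt hne
  have hs : (fun p : E => Real.sqrt (‖p‖ ^ 2)) = fun p : E => ‖p‖ := by
    funext p; rw [Real.sqrt_sq (norm_nonneg p)]
  rw [hs] at h
  convert h using 1
  ext v
  rw [Real.sqrt_sq (norm_nonneg q)]
  simp [real_inner_smul_left]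
  ring

/-- For a fixed unit vector `k` and `L_r(q) = 2(1 − ⟨q/‖q‖, k⟩)`, the squared norm of the
gradient of `L_r` at any nonzero `q` equals `(4/‖q‖²)(1 − ⟨q̃, k⟩²)`. -/
theorem stmt2 {E : Type*} [NormedAddCommGroup E] [InnerProductSpace ℝ E]
    [FiniteDimensional ℝ E] (k : E) (hk : ‖k‖ = 1) (q : E) (hq : q ≠ 0) :
    ‖gradient (fun p : E => 2 * (1 - ⟪‖p‖⁻¹ • p, k⟫)) q‖ ^ 2
      = 4 / ‖q‖ ^ 2 * (1 - ⟪‖q‖⁻¹ • q, k⟫ ^ 2) := by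
  have hq0 : ‖q‖ ≠ 0 := norm_ne_zero_iff.mpr hq
  set c : ℝ := ⟪‖q‖⁻¹ • q, k⟫ with hc
  set G : E := (2 * ‖q‖⁻¹ * c) • (‖q‖⁻¹ • q) - (2 * ‖q‖⁻¹) • k with hG
  -- derivative of p ↦ ‖p‖⁻¹
  have hnorm := aux_hasFDerivAt_norm q hq
  have hinv : HasFDerivAt (fun p : E => ‖p‖⁻¹)
      ((-(‖q‖ ^ 2)⁻¹) • innerSL ℝ (‖q‖⁻¹ • q)) q := by
    have := (hasDerivAt_inv hq0).comp_hasFDerivAt q hnorm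
    convert this using 1
    all_goals (ext v; simp; try ring)
  -- derivative of p ↦ ⟪p, k⟫
  have hin : HasFDerivAt (fun p : E => ⟪p, k⟫) (innerSL ℝ k) q := by
    have : HasFDerivAt (fun p : E => ⟪k, p⟫) (innerSL ℝ k) q := (innerSL ℝ k).hasFDerivAt
    convert this using 1
    funext p; exact real_inner_comm k p
  have hmul := hinv.mul hin
  have hf : HasFDerivAt (fun p : E => 2 * (1 - ⟪‖p‖⁻¹ • p, k⟫)) (innerSL ℝ G) q := by
    have heq : (fun p : E => 2 * (1 - ⟪‖p‖⁻¹ • p, k⟫))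
        = fun p : E => 2 * (1 - ‖p‖⁻¹ * ⟪p, k⟫) := by
      funext p; rw [real_inner_smul_left]
    rw [heq]
    convert ((hasFDerivAt_const (1:ℝ) q).sub hmul).const_mul 2 using 1
    · rfl
    · rfl
    · rfl
    ext v
    simp [hG, hc, inner_sub_left, real_inner_smul_left, inner_smul_left, smul_sub]
    try ring
  have hgrad : HasGradientAt (fun p : E => 2 * (1 - ⟪‖p‖⁻¹ • p, k⟫)) G q := by
    rw [hasGradientAt_iff_hasFDerivAt]
    convert hf using 1
    all_goals (ext v; simp [InnerProductSpace.toDual_apply_apply])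
  rw [hgrad.gradient]
  -- now compute ‖G‖²
  have hu : ‖(‖q‖⁻¹ • q)‖ = 1 := by
    rw [norm_smul]; simp [abs_of_nonneg (inv_nonneg.mpr (norm_nonneg q)), inv_mul_cancel₀ hq0]
  have hGsq : ‖G‖ ^ 2 = ⟪G, G⟫ := (real_inner_self_eq_norm_sq G).symm
  rw [hGsq, hG]
  have huu : ⟪(‖q‖⁻¹ • q), (‖q‖⁻¹ • q)⟫ = 1 := by
    rw [real_inner_self_eq_norm_sq, hu]; norm_num
  have hkk : ⟪k, k⟫ = 1 := by rw [real_inner_self_eq_norm_sq, hk]; norm_num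
  have hku : ⟪k, (‖q‖⁻¹ • q)⟫ = c := real_inner_comm _ k
  have hqq : ⟪q, q⟫ = ‖q‖ ^ 2 := real_inner_self_eq_norm_sq q
  have hkq : ⟪k, q⟫ = ‖q‖ * c := by
    rw [real_inner_comm, hc, real_inner_smul_left]; field_simp
  simp only [inner_sub_left, inner_sub_right, real_inner_smul_left, real_inner_smul_right,
    huu, hkk, hku, hqq, hkq, ← hc]
  field_simp
  ring
end

section
/- Let k be a fixed unit vector in a finite-dimensional real inner product space and let L̃_r(q) = 2√(1 − ⟨q/‖q‖, k⟩). Then for every nonzero q with ⟨q/‖q‖, k⟩ < 1, the squared norm of the gradient of L̃_r at q equals (1/‖q‖²)·(1 + ⟨q̃, k⟩), where q̃ = q/‖q‖. -/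
open scoped RealInnerProductSpace

/-- For a fixed unit vector `k` and `L̃_r(q) = 2√(1 − ⟨q/‖q‖, k⟩)`, the squared norm of the
gradient of `L̃_r` at any nonzero `q` with `⟨q/‖q‖, k⟩ < 1` equals
`(1/‖q‖²)(1 + ⟨q̃, k⟩)`. -/
theorem stmt3 {E : Type*} [NormedAddCommGroup E] [InnerProductSpace ℝ E]
    [FiniteDimensional ℝ E] (k : E) (hk : ‖k‖ = 1) (q : E) (hq : q ≠ 0)
    (hlt : ⟪‖q‖⁻¹ • q, k⟫ < 1) :
    ‖gradient (fun p : E => 2 * Real.sqrt (1 - ⟪‖p‖⁻¹ • p, k⟫)) q‖ ^ 2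
      = 1 / ‖q‖ ^ 2 * (1 + ⟪‖q‖⁻¹ • q, k⟫) := by
  have hr : (0:ℝ) < ‖q‖ := norm_pos_iff.mpr hq
  have hr0 : ‖q‖ ≠ 0 := ne_of_gt hr
  set r : ℝ := ‖q‖ with hrdef
  set c : ℝ := ⟪‖q‖⁻¹ • q, k⟫ with hcdef
  have hc : c = r⁻¹ * ⟪q, k⟫ := by rw [hcdef, real_inner_smul_left]
  have hqq : ⟪q, q⟫ = r ^ 2 := real_inner_self_eq_norm_sq q
  have hqq0 : ⟪q, q⟫ ≠ 0 := by rw [hqq]; positivity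
  have hsq : Real.sqrt ⟪q, q⟫ = r := by rw [hqq, Real.sqrt_sq hr.le]
  have h1c : (0:ℝ) < 1 - c := by linarith
  set t : ℝ := Real.sqrt (1 - c) with htdef
  have ht2 : t ^ 2 = 1 - c := Real.sq_sqrt h1c.le
  have ht : 0 < t := Real.sqrt_pos.mpr h1c
  have ht0 : t ≠ 0 := ne_of_gt ht
  -- rewrite the function
  have hfun : (fun p : E => 2 * Real.sqrt (1 - ⟪‖p‖⁻¹ • p, k⟫))
      = (fun p : E => 2 * Real.sqrt (1 - (Real.sqrt ⟪p, p⟫)⁻¹ * ⟪p, k⟫)) := by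
    funext p
    rw [real_inner_smul_left]
    congr 3
    rw [real_inner_self_eq_norm_mul_norm, Real.sqrt_mul_self (norm_nonneg p)]
  rw [hfun]
  -- the gradient vector
  set v : E := (t⁻¹ * r⁻¹) • ((r⁻¹ * r⁻¹ * ⟪q, k⟫) • q - k) with hvdef
  -- build the derivative
  have hA : HasFDerivAt (fun p : E => ⟪p, p⟫)
      ((fderivInnerCLM ℝ (q, q)).comp ((ContinuousLinearMap.id ℝ E).prod
        (ContinuousLinearMap.id ℝ E))) q :=
    (hasFDerivAt_id q).inner ℝ (hasFDerivAt_id q)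
  have hS : HasFDerivAt (fun p : E => Real.sqrt ⟪p, p⟫)
      ((1 / (2 * Real.sqrt ⟪q, q⟫)) • ((fderivInnerCLM ℝ (q, q)).comp
        ((ContinuousLinearMap.id ℝ E).prod (ContinuousLinearMap.id ℝ E)))) q :=
    hA.sqrt hqq0
  have hsne : Real.sqrt ⟪q, q⟫ ≠ 0 := by rw [hsq]; exact hr0
  have hInv : HasFDerivAt (fun p : E => (Real.sqrt ⟪p, p⟫)⁻¹)
      ((-(Real.sqrt ⟪q, q⟫ ^ 2)⁻¹) • ((1 / (2 * Real.sqrt ⟪q, q⟫)) •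
        ((fderivInnerCLM ℝ (q, q)).comp ((ContinuousLinearMap.id ℝ E).prod
          (ContinuousLinearMap.id ℝ E))))) q :=
    (hasDerivAt_inv hsne).comp_hasFDerivAt q hS
  have hK : HasFDerivAt (fun p : E => ⟪p, k⟫)
      ((fderivInnerCLM ℝ (q, k)).comp ((ContinuousLinearMap.id ℝ E).prod
        (0 : E →L[ℝ] E))) q :=
    (hasFDerivAt_id q).inner ℝ (hasFDerivAt_const k q)
  have hMul := hInv.mul hK
  have hSub := (hasFDerivAt_const (1:ℝ) q).sub hMul
  have hcval : 1 - (Real.sqrt ⟪q, q⟫)⁻¹ * ⟪q, k⟫ = 1 - c := by rw [hsq, hc]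
  have hne2 : 1 - (Real.sqrt ⟪q, q⟫)⁻¹ * ⟪q, k⟫ ≠ 0 := by rw [hcval]; exact ne_of_gt h1c
  have hSqrt := hSub.sqrt hne2
  have hF := hSqrt.const_mul (2:ℝ)
  have hts2 : Real.sqrt (1 - r⁻¹ * ⟪q, k⟫) = t := by
    rw [← hc]
  have hG : HasGradientAt (fun p : E => 2 * Real.sqrt (1 - (Real.sqrt ⟪p, p⟫)⁻¹ * ⟪p, k⟫)) v q := by
    rw [hasGradientAt_iff_hasFDerivAt]
    convert hF using 1
    swap
    · rfl
    · rfl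
    ext x
    simp only [InnerProductSpace.toDual_apply_apply, ContinuousLinearMap.smul_apply,
      ContinuousLinearMap.sub_apply, ContinuousLinearMap.add_apply,
      ContinuousLinearMap.comp_apply, ContinuousLinearMap.prod_apply,
      ContinuousLinearMap.coe_id', id_eq, ContinuousLinearMap.zero_apply,
      fderivInnerCLM_apply, ContinuousLinearMap.coe_zero, Pi.zero_apply,
      smul_eq_mul, Pi.sub_apply, Pi.mul_apply, hsq, hts2, inner_zero_right, hvdef]
    rw [real_inner_smul_left, inner_sub_left, real_inner_smul_left]
    rw [← real_inner_comm x q, ← real_inner_comm x k]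
    field_simp
    ring
  rw [hG.gradient]
  -- compute the norm
  have hkk : ⟪k, k⟫ = (1:ℝ) := by
    rw [real_inner_self_eq_norm_sq, hk]; norm_num
  have hnv : ‖v‖ ^ 2 = ⟪v, v⟫ := (real_inner_self_eq_norm_sq v).symm
  rw [hnv, hvdef]
  simp only [real_inner_smul_left, real_inner_smul_right, inner_sub_left, inner_sub_right,
    hqq, hkk, real_inner_comm q k]
  have hck : ⟪q, k⟫ = r * c := by rw [hc]; field_simp
  rw [hck]
  field_simp
  linear_combination (-(1 + c)) * ht2
end

section
/- (Clean pairs dominate the noisy-pair robust loss.) Let q be a nonzero vector in a finite-dimensional real inner product space with q̃ = q/‖q‖, and let k_j, k_m be unit vectors (a clean pair and a noisy pair respectively) satisfying ⟨q̃, k_m⟩ < ⟨q̃, k_j⟩ < 1. Writing L̃_r(q; k) = 2√(1 − ⟨q̃, k⟩), the gradient with respect to q of the noisy-pair loss is strictly smaller in norm than that of the clean-pair loss: ‖∇_q L̃_r(q; k_m)‖² = (1/‖q‖²)(1 + ⟨q̃, k_m⟩) < (1/‖q‖²)(1 + ⟨q̃, k_j⟩) = ‖∇_q L̃_r(q; k_j)‖².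 -/
/-!
The gradient of `q ↦ ⟪q̃, k⟫` is `(k - ⟪q̃, k⟫ q̃) / ‖q‖`, the part of `k` orthogonal to `q̃`
scaled by `1 / ‖q‖`; for a unit `k` its squared norm is `(1 - c²) / ‖q‖²` with `c = ⟪q̃, k⟫`.
The chain rule through `t ↦ 2√(1 - t)` divides this by `1 - c`, leaving `(1 + c) / ‖q‖²`,
which is increasing in `c`.
-/

open scoped RealInnerProductSpace
open InnerProductSpace

theorem norm_sub_inner_smul_sq {F : Type*} [NormedAddCommGroup F] [InnerProductSpace ℝ F]
    {u : F} (hu : ‖u‖ = 1) (k : F) : ‖k - ⟪u, k⟫ • u‖ ^ 2 = ‖k‖ ^ 2 - ⟪u, k⟫ ^ 2 := by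
  rw [norm_sub_sq_real, real_inner_smul_right, norm_smul, hu, real_inner_comm,
    Real.norm_eq_abs, mul_one, sq_abs]
  ring

theorem hasDerivAt_two_mul_sqrt_one_sub {c : ℝ} (hc : c < 1) :
    HasDerivAt (fun t => 2 * √(1 - t)) (-(√(1 - c))⁻¹) c := by
  have hpos : 0 < √(1 - c) := Real.sqrt_pos.mpr (by linarith)
  refine ((((hasDerivAt_id c).const_sub 1).sqrt (by simp; linarith)).const_mul 2).congr_deriv ?_
  simp only [id]
  field_simp

section Gradient

variable {F : Type*} [NormedAddCommGroup F] [InnerProductSpace ℝ F] [CompleteSpace F]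
  {f g : F → ℝ} {f' g' x : F}

theorem HasDerivAt.comp_hasGradientAt {h : ℝ → ℝ} {h' : ℝ} (hh : HasDerivAt h h' (f x))
    (hf : HasGradientAt f f' x) : HasGradientAt (fun y => h (f y)) (h' • f') x := by
  rw [hasGradientAt_iff_hasFDerivAt, map_smul]
  exact hh.comp_hasFDerivAt x (hasGradientAt_iff_hasFDerivAt.mp hf)

theorem HasGradientAt.mul (hf : HasGradientAt f f' x) (hg : HasGradientAt g g' x) :
    HasGradientAt (fun y => f y * g y) (f x • g' + g x • f') x := by
  rw [hasGradientAt_iff_hasFDerivAt, map_add, map_smul, map_smul]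
  exact (hasGradientAt_iff_hasFDerivAt.mp hf).mul (hasGradientAt_iff_hasFDerivAt.mp hg)

theorem hasGradientAt_inner_left (k x : F) : HasGradientAt (fun p => ⟪p, k⟫) k x := by
  have : (fun p => ⟪p, k⟫) = toDual ℝ F k := by
    ext p
    rw [toDual_apply_apply, real_inner_comm]
  rw [hasGradientAt_iff_hasFDerivAt, this]
  exact (toDual ℝ F k).hasFDerivAt

theorem hasGradientAt_norm_sq (x : F) : HasGradientAt (‖·‖ ^ 2) ((2 : ℝ) • x) x := by
  rw [hasGradientAt_iff_hasFDerivAt, map_smul]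
  refine (hasStrictFDerivAt_norm_sq x).hasFDerivAt.congr_fderiv ?_
  rw [two_smul, two_smul]
  rfl

theorem hasGradientAt_norm (hx : x ≠ 0) : HasGradientAt (‖·‖) (‖x‖⁻¹ • x) x := by
  have hx' : ‖x‖ ^ 2 ≠ 0 := by positivity
  have := (Real.hasDerivAt_sqrt hx').comp_hasGradientAt (f := (‖·‖ ^ 2)) (hasGradientAt_norm_sq x)
  simp only [Real.sqrt_sq (norm_nonneg _), smul_smul] at this
  convert this using 2
  field_simp

theorem hasGradientAt_inner_normalize {q : F} (hq : q ≠ 0) (k : F) :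
    HasGradientAt (fun p => ⟪‖p‖⁻¹ • p, k⟫)
      (‖q‖⁻¹ • (k - ⟪‖q‖⁻¹ • q, k⟫ • (‖q‖⁻¹ • q))) q := by
  have hinv := (hasDerivAt_inv (norm_ne_zero_iff.mpr hq)).comp_hasGradientAt
    (f := (‖·‖)) (hasGradientAt_norm hq)
  have := hinv.mul (hasGradientAt_inner_left k q)
  simp only [← real_inner_smul_left] at this
  convert this using 1
  simp only [real_inner_smul_left, smul_sub, smul_smul]
  module

end Gradient

section RobustLoss

variable {F : Type*} [NormedAddCommGroup F] [InnerProductSpace ℝ F]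

/-- `robustLoss k q` is the paper's `L̃_r(q; k)`. -/
noncomputable def robustLoss (k p : F) : ℝ := 2 * √(1 - ⟪‖p‖⁻¹ • p, k⟫)

theorem hasGradientAt_robustLoss [CompleteSpace F] {q k : F} (hq : q ≠ 0)
    (hc : ⟪‖q‖⁻¹ • q, k⟫ < 1) :
    HasGradientAt (robustLoss k)
      (-(√(1 - ⟪‖q‖⁻¹ • q, k⟫))⁻¹ • ‖q‖⁻¹ • (k - ⟪‖q‖⁻¹ • q, k⟫ • (‖q‖⁻¹ • q))) q :=
  (hasDerivAt_two_mul_sqrt_one_sub hc).comp_hasGradientAt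
    (f := fun p => ⟪‖p‖⁻¹ • p, k⟫) (hasGradientAt_inner_normalize hq k)

theorem norm_gradient_robustLoss_sq [CompleteSpace F] {q k : F} (hq : q ≠ 0) (hk : ‖k‖ = 1)
    (hc : ⟪‖q‖⁻¹ • q, k⟫ < 1) :
    ‖gradient (robustLoss k) q‖ ^ 2 = 1 / ‖q‖ ^ 2 * (1 + ⟪‖q‖⁻¹ • q, k⟫) := by
  have hu : ‖‖q‖⁻¹ • q‖ = 1 := by
    rw [norm_smul, norm_inv, norm_norm, inv_mul_cancel₀ (norm_ne_zero_iff.mpr hq)]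
  have hpos : 0 < 1 - ⟪‖q‖⁻¹ • q, k⟫ := by linarith
  have hne : 1 - ⟪‖q‖⁻¹ • q, k⟫ ≠ 0 := hpos.ne'
  rw [(hasGradientAt_robustLoss hq hc).gradient, norm_smul, norm_smul, mul_pow, mul_pow,
    norm_sub_inner_smul_sq hu, hk]
  simp only [norm_neg, norm_inv, Real.norm_eq_abs, inv_pow, sq_abs, Real.sq_sqrt hpos.le]
  generalize ⟪‖q‖⁻¹ • q, k⟫ = c at hne ⊢
  field_simp
  ring

end RobustLoss

/-- Clean pairs dominate the noisy-pair robust loss: if `k_j` (clean) and `k_m` (noisy)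
are unit vectors with `⟨q̃, k_m⟩ < ⟨q̃, k_j⟩ < 1`, then for
`L̃_r(q; k) = 2√(1 − ⟨q̃, k⟩)` one has
`‖∇_q L̃_r(q; k_m)‖² = (1/‖q‖²)(1 + ⟨q̃, k_m⟩) < (1/‖q‖²)(1 + ⟨q̃, k_j⟩) = ‖∇_q L̃_r(q; k_j)‖²`. -/
theorem stmt5 {E : Type*} [NormedAddCommGroup E] [InnerProductSpace ℝ E]
    [FiniteDimensional ℝ E] (q kj km : E) (hq : q ≠ 0)
    (hkj : ‖kj‖ = 1) (hkm : ‖km‖ = 1)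
    (h1 : ⟪‖q‖⁻¹ • q, km⟫ < ⟪‖q‖⁻¹ • q, kj⟫) (h2 : ⟪‖q‖⁻¹ • q, kj⟫ < 1) :
    ‖gradient (fun p : E => 2 * Real.sqrt (1 - ⟪‖p‖⁻¹ • p, km⟫)) q‖ ^ 2
        = 1 / ‖q‖ ^ 2 * (1 + ⟪‖q‖⁻¹ • q, km⟫) ∧
      1 / ‖q‖ ^ 2 * (1 + ⟪‖q‖⁻¹ • q, km⟫)
        < 1 / ‖q‖ ^ 2 * (1 + ⟪‖q‖⁻¹ • q, kj⟫) ∧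
      1 / ‖q‖ ^ 2 * (1 + ⟪‖q‖⁻¹ • q, kj⟫)
        = ‖gradient (fun p : E => 2 * Real.sqrt (1 - ⟪‖p‖⁻¹ • p, kj⟫)) q‖ ^ 2 := by
  have hq2 : 0 < 1 / ‖q‖ ^ 2 := by positivity
  exact ⟨norm_gradient_robustLoss_sq hq hkm (h1.trans h2),
    mul_lt_mul_of_pos_left (by linarith) hq2,
    (norm_gradient_robustLoss_sq hq hkj h2).symm⟩
end

section
/- (Bounded gradients of the noisy-pair robust loss.) Let k be a unit vector in a finite-dimensional real inner product space and L̃_r(q) = 2√(1 − ⟨q/‖q‖, k⟩). Then for every nonzero q with ⟨q/‖q‖, k⟩ < 1, the gradient of L̃_r at q satisfies ‖∇L̃_r(q)‖² ≤ 2/‖q‖². -/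
open scoped RealInnerProductSpace

/-- Bounded gradients of the noisy-pair robust loss: for a unit vector `k` and
`L̃_r(q) = 2√(1 − ⟨q/‖q‖, k⟩)`, every nonzero `q` with `⟨q/‖q‖, k⟩ < 1` satisfies
`‖∇L̃_r(q)‖² ≤ 2/‖q‖²`. -/
theorem stmt6 {E : Type*} [NormedAddCommGroup E] [InnerProductSpace ℝ E]
    [FiniteDimensional ℝ E] (k : E) (hk : ‖k‖ = 1) (q : E) (hq : q ≠ 0)
    (hlt : ⟪‖q‖⁻¹ • q, k⟫ < 1) :
    ‖gradient (fun p : E => 2 * Real.sqrt (1 - ⟪‖p‖⁻¹ • p, k⟫)) q‖ ^ 2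
      ≤ 2 / ‖q‖ ^ 2 := by
  have hq0 : (0:ℝ) < ‖q‖ := norm_pos_iff.mpr hq
  have hqne : ‖q‖ ≠ 0 := ne_of_gt hq0
  set g : ℝ := ‖q‖⁻¹ * ⟪q, k⟫ with hg
  have hglt : g < 1 := by rwa [real_inner_smul_left] at hlt
  set s : ℝ := Real.sqrt (1 - g) with hs
  have hspos : (0:ℝ) < s := Real.sqrt_pos.mpr (by linarith)
  have hs2 : s ^ 2 = 1 - g := Real.sq_sqrt (by linarith)
  set G : E := (s⁻¹ * ‖q‖⁻¹) • (g • (‖q‖⁻¹ • q) - k) with hG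
  -- derivative of norm
  have hnorm : HasFDerivAt (fun p : E => ‖p‖) (‖q‖⁻¹ • innerSL ℝ q) q := by
    have h1 : HasFDerivAt (fun p : E => ‖p‖ ^ 2) ((2:ℕ) • innerSL ℝ q) q :=
      (hasStrictFDerivAt_norm_sq q).hasFDerivAt
    have h2 : HasDerivAt Real.sqrt (1 / (2 * Real.sqrt (‖q‖ ^ 2))) (‖q‖ ^ 2) :=
      Real.hasDerivAt_sqrt (by positivity)
    have h3 := h2.comp_hasFDerivAt q h1
    have h4 : (fun p : E => Real.sqrt (‖p‖ ^ 2)) = fun p : E => ‖p‖ := by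
      funext p; rw [Real.sqrt_sq (norm_nonneg p)]
    simp only [Function.comp_def] at h3
    rw [h4] at h3
    refine h3.congr_fderiv ?_
    rw [Real.sqrt_sq (norm_nonneg q)]
    ext v
    simp
    ring
  have hinv : HasFDerivAt (fun p : E => ‖p‖⁻¹)
      ((-(‖q‖ ^ 2)⁻¹) • (‖q‖⁻¹ • innerSL ℝ q)) q :=
    (hasDerivAt_inv hqne).comp_hasFDerivAt q hnorm
  have hik : HasFDerivAt (fun p : E => ⟪p, k⟫) (innerSL ℝ k) q := by
    have := (innerSL ℝ k).hasFDerivAt (x := q)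
    apply this.congr_of_eventuallyEq
    filter_upwards with p
    simp [real_inner_comm]
  have hmul := hinv.mul hik
  have hsub := (hasFDerivAt_const (1:ℝ) q).sub hmul
  have hsqrt : HasDerivAt Real.sqrt (1 / (2 * s)) (1 - g) := by
    rw [hs]; exact Real.hasDerivAt_sqrt (by linarith)
  have harg : (fun p : E => 1 - ‖p‖⁻¹ * ⟪p, k⟫) q = 1 - g := by simp [hg]
  have hcomp := (hsqrt.comp_hasFDerivAt_of_eq q hsub harg.symm)
  have hfull := hcomp.const_mul (2:ℝ)
  have hfun : (fun p : E => 2 * Real.sqrt (1 - ⟪‖p‖⁻¹ • p, k⟫))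
      = fun p : E => 2 * Real.sqrt (1 - ‖p‖⁻¹ * ⟪p, k⟫) := by
    funext p; rw [real_inner_smul_left]
  have hgrad : HasGradientAt (fun p : E => 2 * Real.sqrt (1 - ⟪‖p‖⁻¹ • p, k⟫)) G q := by
    rw [hfun, hasGradientAt_iff_hasFDerivAt]
    refine hfull.congr_fderiv ?_
    ext v
    rw [InnerProductSpace.toDual_apply_apply]
    simp [hG, inner_smul_left, inner_sub_left, real_inner_smul_left, hg,
      real_inner_comm q v]
    field_simp
    ring
  rw [hgrad.gradient]
  -- norm computation
  have hCS : |⟪q, k⟫| ≤ ‖q‖ := by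
    calc |⟪q, k⟫| ≤ ‖q‖ * ‖k‖ := abs_real_inner_le_norm q k
    _ = ‖q‖ := by rw [hk, mul_one]
  have hqq : ⟪q, q⟫ = ‖q‖ ^ 2 := real_inner_self_eq_norm_sq q
  have hkk : ⟪k, k⟫ = 1 := by rw [real_inner_self_eq_norm_sq, hk]; norm_num
  have hGnorm : ‖G‖ ^ 2 = (1 + g) / ‖q‖ ^ 2 := by
    rw [← real_inner_self_eq_norm_sq, hG]
    have e1 : (⟪q, k⟫ : ℝ) = g * ‖q‖ := by rw [hg]; field_simp
    simp only [inner_smul_left, inner_smul_right, inner_sub_left, inner_sub_right,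
      conj_trivial, hqq, hkk, real_inner_comm k q]
    rw [show (⟪k, q⟫:ℝ) = g * ‖q‖ by rw [real_inner_comm]; exact e1]
    have hsne : s ≠ 0 := ne_of_gt hspos
    have h1g : (1:ℝ) - g ≠ 0 := by linarith
    have hsinv : s⁻¹ * s⁻¹ = (1 - g)⁻¹ := by rw [← hs2, sq, mul_inv]
    clear_value G s g
    field_simp
    linear_combination (-(1+g)) * hs2
  rw [hGnorm]
  have hgge : -1 ≤ g := by
    rw [hg]
    have h2 : -‖q‖ ≤ ⟪q, k⟫ := (abs_le.mp hCS).1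
    nlinarith [mul_nonneg (le_of_lt (inv_pos.mpr hq0))
      (by linarith : (0:ℝ) ≤ ⟪q, k⟫ + ‖q‖), inv_mul_cancel₀ hqne]
  apply div_le_div_of_nonneg_right ?_ (by positivity)
  linarith
end
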